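/- arXiv:1907.04140 — 4 statements merged into one kernel-verified Lean document; each statement's English description precedes it below -/
import Mathlib

section
/- Let λ be a complex number of modulus 1 such that there exist C, r > 0 with |∑_{j=m}^{N} λ^{ℓj}| < C ℓ^r for all positive integers ℓ and 0 < m < N, and let κ be purely imaginary. Then there exists C̃ > 0 such that for all positive integers n, ℓ: |∑_{k=n}^{∞} (e^{κ ℓ log k}/k) λ^{kℓ}| < C̃ ℓ^{r+1} / n. -/
/-!
Write `exp (κ ℓ log k) = k ^ (i t)` with `t = ℓ · Im κ`. Summation by parts against the partial
sums of `λ ^ (kℓ)`, which are bounded by `C ℓ ^ r + 1`, reduces a block `∑_{k=m}^{M}` of the series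
to the variation of `k ↦ k ^ (i t) / k`, and this telescopes:
`‖k ^ (i t) / k - (k+1) ^ (i t) / (k+1)‖ ≤ (1 + |t|) (1/k - 1/(k+1))`.
So every block starting at `m` has norm at most `(1 + |t|) (C ℓ ^ r + 1) / m`, which makes the
partial sums Cauchy and bounds the limit.
-/

open Complex Finset Filter

theorem sum_Icc_mul_by_parts {R : Type*} [Ring R] (f a : ℕ → R) {n N : ℕ} (hnN : n ≤ N) :
    ∑ k ∈ Icc n N, f k * a k
      = f N * ∑ j ∈ Icc n N, a j + ∑ k ∈ Ico n N, (f k - f (k + 1)) * ∑ j ∈ Icc n k, a j := by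
  induction N, hnN using Nat.le_induction with
  | base => simp
  | succ N hnN ih =>
    rw [sum_Icc_succ_top (by omega), sum_Icc_succ_top (by omega), ih, sum_Ico_succ_top hnN]
    noncomm_ring

theorem norm_sum_Icc_mul_le {R : Type*} [SeminormedRing R] {f a : ℕ → R} {g : ℕ → ℝ}
    {B c : ℝ} {n N : ℕ} (hnN : n ≤ N) (hc : 1 ≤ c) (hB : 0 ≤ B) (hfN : ‖f N‖ ≤ g N)
    (hf : ∀ k ∈ Ico n N, ‖f k - f (k + 1)‖ ≤ c * (g k - g (k + 1)))
    (ha : ∀ k ∈ Icc n N, ‖∑ j ∈ Icc n k, a j‖ ≤ B) :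
    ‖∑ k ∈ Icc n N, f k * a k‖ ≤ c * B * g n := by
  have hterm : ∀ k ∈ Ico n N, ‖(f k - f (k + 1)) * ∑ j ∈ Icc n k, a j‖
      ≤ c * (g k - g (k + 1)) * B := fun k hk =>
    (norm_mul_le _ _).trans <| mul_le_mul (hf k hk)
      (ha k (Ico_subset_Icc_self hk)) (norm_nonneg _) ((norm_nonneg _).trans (hf k hk))
  have htelescope : ∑ k ∈ Ico n N, c * (g k - g (k + 1)) * B = c * (g n - g N) * B := by
    have h := sum_Ico_sub g hnN
    rw [sum_sub_distrib] at h
    rw [← sum_mul, ← mul_sum, sum_sub_distrib]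
    congr 2
    linarith
  have hgN : g N ≤ c * g N := le_mul_of_one_le_left ((norm_nonneg _).trans hfN) hc
  calc ‖∑ k ∈ Icc n N, f k * a k‖
      ≤ ‖f N‖ * ‖∑ j ∈ Icc n N, a j‖
        + ∑ k ∈ Ico n N, ‖(f k - f (k + 1)) * ∑ j ∈ Icc n k, a j‖ := by
        rw [sum_Icc_mul_by_parts f a hnN]
        exact (norm_add_le _ _).trans (add_le_add (norm_mul_le _ _) (norm_sum_le _ _))
    _ ≤ g N * B + c * (g n - g N) * B := by
        rw [← htelescope]
        exact add_le_add (mul_le_mul hfN (ha N (right_mem_Icc.2 hnN)) (norm_nonneg _)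
          ((norm_nonneg _).trans hfN)) (sum_le_sum hterm)
    _ ≤ c * B * g n := by linarith [mul_le_mul_of_nonneg_right hgN hB]

theorem norm_exp_I_mul_ofReal_sub_le (x y : ℝ) :
    ‖exp (I * x) - exp (I * y)‖ ≤ |x - y| := by
  have h : exp (I * x) - exp (I * y) = exp (I * y) * (exp (I * ↑(x - y)) - 1) := by
    rw [mul_sub, mul_one, ← exp_add]
    push_cast
    ring_nf
  rw [h, norm_mul, norm_exp_I_mul_ofReal, one_mul, ← Real.norm_eq_abs]
  exact Real.norm_exp_I_mul_ofReal_sub_one_le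

theorem norm_exp_I_mul_log_div_sub_le (t : ℝ) {x y : ℝ} (hx : 0 < x) (hxy : x ≤ y) :
    ‖exp (I * ↑(t * Real.log x)) / x - exp (I * ↑(t * Real.log y)) / y‖
      ≤ (1 + |t|) * (1 / x - 1 / y) := by
  have hy : 0 < y := hx.trans_le hxy
  set ex := exp (I * ↑(t * Real.log x))
  set ey := exp (I * ↑(t * Real.log y))
  have hsplit : ex / x - ey / y = ex * ↑(1 / x - 1 / y) + (ex - ey) * ↑(1 / y) := by
    push_cast
    ring
  have hlog : Real.log y - Real.log x ≤ (y - x) / x := by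
    rw [← Real.log_div hy.ne' hx.ne', sub_div, div_self hx.ne']
    exact Real.log_le_sub_one_of_pos (div_pos hy hx)
  have hdiff : ‖ex - ey‖ ≤ |t| * ((y - x) / x) := by
    calc ‖ex - ey‖ ≤ |t * Real.log x - t * Real.log y| := norm_exp_I_mul_ofReal_sub_le _ _
      _ = |t| * (Real.log y - Real.log x) := by
        rw [← mul_sub, abs_mul, abs_sub_comm,
          abs_of_nonneg (sub_nonneg.2 (Real.log_le_log hx hxy))]
      _ ≤ |t| * ((y - x) / x) := mul_le_mul_of_nonneg_left hlog (abs_nonneg t)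
  have hrecip : 0 ≤ 1 / x - 1 / y := sub_nonneg.2 (one_div_le_one_div_of_le hx hxy)
  calc ‖ex / x - ey / y‖ ≤ 1 * (1 / x - 1 / y) + |t| * ((y - x) / x) * (1 / y) := by
        rw [hsplit]
        refine (norm_add_le _ _).trans (add_le_add ?_ ?_)
        · rw [norm_mul, norm_exp_I_mul_ofReal, norm_real, Real.norm_of_nonneg hrecip]
        · rw [norm_mul, norm_real, Real.norm_of_nonneg (by positivity)]
          exact mul_le_mul_of_nonneg_right hdiff (by positivity)
    _ = (1 + |t|) * (1 / x - 1 / y) := by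
        field_simp

theorem sum_Icc_sub_sum_Icc {M : Type*} [AddCommGroup M] (g : ℕ → M) {n N K : ℕ}
    (hnN : n ≤ N + 1) (hNK : N ≤ K) :
    ∑ k ∈ Icc n K, g k - ∑ k ∈ Icc n N, g k = ∑ k ∈ Icc (N + 1) K, g k := by
  induction K, hNK using Nat.le_induction with
  | base => simp
  | succ K hNK ih =>
    rw [sum_Icc_succ_top (by omega), sum_Icc_succ_top (by omega), ← ih]
    abel

theorem exists_tendsto_sum_Icc_of_norm_sum_Icc_le {E : Type*} [NormedAddCommGroup E]
    [CompleteSpace E] (g : ℕ → E) {D : ℝ} {n : ℕ}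
    (hg : ∀ m M, n ≤ m → m ≤ M → ‖∑ k ∈ Icc m M, g k‖ ≤ D / m) :
    ∃ S, Tendsto (fun N => ∑ k ∈ Icc n N, g k) atTop (nhds S) ∧ ‖S‖ ≤ D / n := by
  have hcauchy : CauchySeq fun N => ∑ k ∈ Icc n N, g k := by
    rw [Metric.cauchySeq_iff']
    intro ε hε
    have hsmall : Tendsto (fun N : ℕ => D / ((N + 1 : ℕ) : ℝ)) atTop (nhds 0) :=
      tendsto_const_div_atTop_nhds_zero_nat D |>.comp (tendsto_add_atTop_nat 1)
    obtain ⟨N, hN⟩ := ((hsmall.eventually (gt_mem_nhds hε)).and (eventually_ge_atTop n)).exists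
    refine ⟨N, fun K hK => ?_⟩
    rw [dist_eq_norm, sum_Icc_sub_sum_Icc g (by omega) hK]
    rcases hK.eq_or_lt with rfl | hlt
    · simpa using hε
    · exact (hg _ _ (by omega) hlt).trans_lt hN.1
  obtain ⟨S, hS⟩ := cauchySeq_tendsto_of_complete hcauchy
  refine ⟨S, hS, le_of_tendsto hS.norm ?_⟩
  filter_upwards [eventually_ge_atTop n] with N hN using hg n N le_rfl hN

theorem norm_sum_Icc_exp_I_mul_log_div_mul_le (t : ℝ) {a : ℕ → ℂ} {B : ℝ} {m M : ℕ}
    (hm : 0 < m) (hmM : m ≤ M) (hB : 0 ≤ B) (ha : ∀ k ∈ Icc m M, ‖∑ j ∈ Icc m k, a j‖ ≤ B) :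
    ‖∑ k ∈ Icc m M, exp (I * ↑(t * Real.log k)) / k * a k‖ ≤ (1 + |t|) * B / m := by
  refine (norm_sum_Icc_mul_le (g := fun k : ℕ => 1 / (k : ℝ)) hmM (by simp) hB ?_ ?_ ha).trans_eq
    (mul_one_div _ _)
  · rw [norm_div, norm_exp_I_mul_ofReal, norm_natCast]
  · intro k hk
    have hk0 : (0 : ℝ) < k := by exact_mod_cast hm.trans_le (mem_Ico.1 hk).1
    push_cast
    simpa using norm_exp_I_mul_log_div_sub_le t hk0 (le_add_of_nonneg_right zero_le_one)

theorem norm_sum_Icc_pow_mul_le {lam : ℂ} (hlam : ‖lam‖ = 1) {ℓ : ℕ} {B : ℝ} (hB : 0 ≤ B)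
    (h : ∀ m K : ℕ, 0 < m → m < K → ‖∑ j ∈ Icc m K, lam ^ (ℓ * j)‖ < B) {m K : ℕ}
    (hm : 0 < m) (hmK : m ≤ K) : ‖∑ j ∈ Icc m K, lam ^ (j * ℓ)‖ ≤ B + 1 := by
  simp_rw [mul_comm _ ℓ]
  rcases hmK.eq_or_lt with rfl | hlt
  · simpa [hlam] using hB
  · exact (h m K hm hlt).le.trans (le_add_of_nonneg_right zero_le_one)

theorem stmt_1 (lam : ℂ) (hlam : ‖lam‖ = 1) (κ : ℂ) (hκ : κ.re = 0)
    (C r : ℝ) (hC : 0 < C) (hr : 0 < r)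
    (hgeom : ∀ ℓ m N : ℕ, 0 < ℓ → 0 < m → m < N →
      ‖∑ j ∈ Finset.Icc m N, lam ^ (ℓ * j)‖ < C * (ℓ : ℝ) ^ r) :
    ∃ Ct > 0, ∀ n ℓ : ℕ, 0 < n → 0 < ℓ →
      ∃ S : ℂ,
        Tendsto (fun N : ℕ =>
            ∑ k ∈ Finset.Icc n N,
              Complex.exp (κ * ℓ * Real.log k) / k * lam ^ (k * ℓ))
          atTop (nhds S) ∧
        ‖S‖ < Ct * (ℓ : ℝ) ^ (r + 1) / n := by
  refine ⟨(C + 1) * (1 + ‖κ‖) + 1, by positivity, fun n ℓ hn hℓ => ?_⟩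
  have hℓ1 : (1 : ℝ) ≤ ℓ := by exact_mod_cast hℓ
  have hℓr : (1 : ℝ) ≤ ℓ ^ r := Real.one_le_rpow hℓ1 hr.le
  have hexp (x : ℝ) : exp (κ * ℓ * x) = exp (I * ↑(κ.im * ℓ * x)) := by
    conv_lhs => rw [← re_add_im κ, hκ]
    push_cast
    ring_nf
  have hblock : ∀ m M, n ≤ m → m ≤ M →
      ‖∑ k ∈ Icc m M, exp (I * ↑(κ.im * ℓ * Real.log k)) / k * lam ^ (k * ℓ)‖
        ≤ (1 + |κ.im * ℓ|) * (C * ℓ ^ r + 1) / m := fun m M hm hmM =>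
    norm_sum_Icc_exp_I_mul_log_div_mul_le _ (hn.trans_le hm) hmM (by positivity)
      fun k hk => norm_sum_Icc_pow_mul_le hlam (by positivity) (hgeom ℓ · · hℓ)
        (hn.trans_le hm) (mem_Icc.1 hk).1
  simp_rw [hexp]
  obtain ⟨S, hS, hSle⟩ := exists_tendsto_sum_Icc_of_norm_sum_Icc_le _ hblock
  refine ⟨S, hS, hSle.trans_lt ?_⟩
  have ht : 1 + |κ.im * ℓ| ≤ (1 + ‖κ‖) * ℓ := by
    rw [abs_mul, Nat.abs_cast]
    nlinarith [abs_im_le_norm κ]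
  rw [Real.rpow_add_one (by positivity)]
  gcongr ?_ / _
  calc (1 + |κ.im * ℓ|) * (C * ℓ ^ r + 1) ≤ (1 + ‖κ‖) * ℓ * ((C + 1) * ℓ ^ r) := by
        gcongr; linarith
    _ = (C + 1) * (1 + ‖κ‖) * (ℓ ^ r * ℓ) := by ring
    _ < ((C + 1) * (1 + ‖κ‖) + 1) * (ℓ ^ r * ℓ) := by gcongr; linarith
end

section
/- ∫_0^1 Φ(x) dx = 1 − π²/4, where Φ(x) = (x² − u(x)²)/(x² u(x)²) and u(x) = (2/π) tan(πx/2). -/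
/-!
With `t = πx/2` one has `1/u(x)² - 1/x² = (π/2)² (cot² t - 1/t²)`, so the integral is
`π/2 · ∫₀^{π/2} (cot² t - 1/t²) dt`. The antiderivative `1/t - t - cot t` of `cot² t - 1/t²`
extends continuously by `0` to `t = 0`, because `1/t - t/2 ≤ cot t ≤ 1/t` there; as the
integrand has constant sign, it is integrable and the fundamental theorem of calculus gives
`∫₀^{π/2} (cot² t - 1/t²) dt = 2/π - π/2`.
-/

open Real Filter Topology Set

lemma cot_le_inv {t : ℝ} (h0 : 0 < t) (h1 : t < π / 2) : cot t ≤ t⁻¹ := by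
  rw [← tan_inv_eq_cot]
  exact inv_anti₀ h0 (lt_tan h0 h1).le

lemma cot_sq_le_inv_sq {t : ℝ} (h0 : 0 < t) (h1 : t < π / 2) : cot t ^ 2 ≤ (t ^ 2)⁻¹ := by
  have hcot : 0 ≤ cot t := by
    rw [← tan_inv_eq_cot]
    exact inv_nonneg.mpr (tan_pos_of_pos_of_lt_pi_div_two h0 h1).le
  rw [← inv_pow]
  exact pow_le_pow_left₀ hcot (cot_le_inv h0 h1) 2

lemma inv_sub_half_le_cot {t : ℝ} (h0 : 0 < t) (h1 : t ≤ π / 2) : t⁻¹ - t / 2 ≤ cot t := by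
  have hsin : 0 < sin t := sin_pos_of_pos_of_lt_pi h0 (by linarith [pi_pos])
  have hcos : 0 ≤ cos t := cos_nonneg_of_mem_Icc ⟨by linarith [pi_pos], h1⟩
  rw [cot_eq_cos_div_sin, le_div_iff₀ hsin, show t⁻¹ - t / 2 = (1 - t ^ 2 / 2) / t by field_simp,
    div_mul_eq_mul_div, div_le_iff₀ h0]
  have hcos_ge := one_sub_sq_div_two_le_cos (x := t)
  have hsin_le := sin_le h0.le
  rcases le_total 0 (1 - t ^ 2 / 2) with h | h
  · nlinarith [mul_le_mul_of_nonneg_left hsin_le h]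
  · nlinarith [mul_nonneg (neg_nonneg.mpr h) hsin.le, mul_nonneg hcos h0.le]

lemma tendsto_inv_sub_cot_nhdsGT_zero : Tendsto (fun t => t⁻¹ - cot t) (𝓝[>] 0) (𝓝 0) := by
  have hhalf : Tendsto (fun t : ℝ => t / 2) (𝓝[>] 0) (𝓝 0) :=
    ((continuous_id.div_const 2).tendsto' 0 0 (by simp)).mono_left nhdsWithin_le_nhds
  refine tendsto_of_tendsto_of_tendsto_of_le_of_le' tendsto_const_nhds hhalf ?_ ?_ <;>
    filter_upwards [Ioo_mem_nhdsGT (half_pos pi_pos)] with t ht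
  · linarith [cot_le_inv ht.1 ht.2]
  · linarith [inv_sub_half_le_cot ht.1 ht.2.le]

lemma hasDerivAt_cot {t : ℝ} (h : sin t ≠ 0) : HasDerivAt cot (-(sin t ^ 2)⁻¹) t := by
  rw [show cot = fun x => cos x / sin x from funext cot_eq_cos_div_sin]
  refine ((hasDerivAt_cos t).div (hasDerivAt_sin t) h).congr_deriv ?_
  field_simp
  linear_combination -sin_sq_add_cos_sq t

lemma hasDerivAt_inv_sub_self_sub_cot {t : ℝ} (h : sin t ≠ 0) :
    HasDerivAt (fun t => t⁻¹ - t - cot t) (cot t ^ 2 - (t ^ 2)⁻¹) t := by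
  have ht : t ≠ 0 := by rintro rfl; simp at h
  refine (((hasDerivAt_inv ht).sub (hasDerivAt_id t)).sub (hasDerivAt_cot h)).congr_deriv ?_
  rw [cot_eq_cos_div_sin]
  field_simp
  linear_combination (-t ^ 2) * sin_sq_add_cos_sq t

/-- At `t = 0` the function takes the junk value `0⁻¹ - 0 - cot 0 = 0`, which is its limit. -/
lemma continuousOn_inv_sub_self_sub_cot : ContinuousOn (fun t => t⁻¹ - t - cot t) (Ico 0 π) := by
  intro t ht
  rcases ht.1.eq_or_lt with rfl | hpos
  · rw [← continuousWithinAt_sdiff_singleton, Ico_sdiff_left]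
    refine ContinuousWithinAt.mono ?_ Ioo_subset_Ioi_self
    have := tendsto_inv_sub_cot_nhdsGT_zero.sub (tendsto_id.mono_left nhdsWithin_le_nhds)
    simpa [ContinuousWithinAt, cot_eq_cos_div_sin, sub_right_comm] using this
  · exact (hasDerivAt_inv_sub_self_sub_cot
      (sin_pos_of_pos_of_lt_pi hpos ht.2).ne').continuousAt.continuousWithinAt

theorem integral_cot_sq_sub_inv_sq :
    ∫ t in 0..π / 2, (cot t ^ 2 - (t ^ 2)⁻¹) = 2 / π - π / 2 := by
  have hcont : ContinuousOn (fun t => t⁻¹ - t - cot t) (Icc 0 (π / 2)) :=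
    continuousOn_inv_sub_self_sub_cot.mono (Icc_subset_Ico_right (by linarith [pi_pos]))
  have hderiv : ∀ t ∈ Ioo 0 (π / 2),
      HasDerivAt (fun t => t⁻¹ - t - cot t) (cot t ^ 2 - (t ^ 2)⁻¹) t := fun t ht =>
    hasDerivAt_inv_sub_self_sub_cot (sin_pos_of_pos_of_lt_pi ht.1 (by linarith [ht.2, pi_pos])).ne'
  have hint : IntervalIntegrable (fun t => cot t ^ 2 - (t ^ 2)⁻¹) MeasureTheory.volume 0 (π / 2) := by
    rw [intervalIntegrable_iff_integrableOn_Ioc_of_le (by positivity)]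
    refine (intervalIntegral.integrableOn_deriv_of_nonneg hcont.neg (fun t ht => (hderiv t ht).neg)
      fun t ht => ?_).neg.congr_fun (fun t _ => by simp) measurableSet_Ioc
    simpa using cot_sq_le_inv_sq ht.1 ht.2
  rw [intervalIntegral.integral_eq_sub_of_hasDerivAt_of_le (by positivity) hcont hderiv hint]
  simp [cot_eq_cos_div_sin]

theorem stmt_4 :
    ∫ x in (0:ℝ)..1, (1 / ((2 / π * Real.tan (π * x / 2)) ^ 2) - 1 / x ^ 2) =
      1 - π ^ 2 / 4 := by
  have hπ : π ≠ 0 := pi_pos.ne'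
  have hsubst : ∀ x : ℝ, 1 / ((2 / π * tan (π * x / 2)) ^ 2) - 1 / x ^ 2 =
      (π / 2) ^ 2 * (cot (π / 2 * x) ^ 2 - ((π / 2 * x) ^ 2)⁻¹) := fun x => by
    rw [← tan_inv_eq_cot, show π * x / 2 = π / 2 * x by ring]
    field_simp
  simp_rw [hsubst]
  rw [intervalIntegral.integral_const_mul,
    intervalIntegral.integral_comp_mul_left (fun t => cot t ^ 2 - (t ^ 2)⁻¹) (by positivity),
    mul_zero, mul_one, integral_cot_sq_sub_inv_sq, smul_eq_mul]
  field_simp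
  ring
end

section
/- Let f(z) = z + z² + az³ + O(z⁴) be a polynomial and c a simple critical point of f lying in the parabolic basin, whose forward orbit avoids all critical points of f. Then the incoming Fatou coordinate φ of f satisfies φ''(c) ≠ 0. More generally, φ''(c) = 0 if and only if c is a multiple critical point of f or the forward orbit of c meets another critical point of f. -/
/-!
The approximations `F n = -1 / f^[n] - n - (1 - a) log n` of the Fatou coordinate are holomorphic
on `U`, so `F n'' c → φ'' c`. Since `c` is critical, the chain rule gives
`F (m+1)'' c = f'' c * ∏_{k<m} f'(x k) / x m ^ 2` along the orbit `x k = f^[k+1] c`, which is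
identically zero from some point on when `f'' c = 0` or the orbit meets a critical point.
Otherwise the quotient telescopes into `x 0⁻² ∏_{k<m} f'(x k) x k² / f(x k)²`, whose factors are
`1 + O(x k²)` because `f(z) = z + O(z²)`; convergence of the Fatou approximations at `c` forces
`x k = O(1/k)`, so the product converges to a nonzero limit.
-/

open Filter Topology Asymptotics Finset Polynomial

theorem TendstoLocallyUniformlyOn.deriv_deriv {ι E : Type*} [NormedAddCommGroup E]
    [NormedSpace ℂ E] [CompleteSpace E] {F : ι → ℂ → E} {f : ℂ → E} {l : Filter ι} {U : Set ℂ}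
    (hf : TendstoLocallyUniformlyOn F f l U) (hF : ∀ᶠ n in l, DifferentiableOn ℂ (F n) U)
    (hU : IsOpen U) :
    TendstoLocallyUniformlyOn (fun n => _root_.deriv (_root_.deriv (F n)))
      (_root_.deriv (_root_.deriv f)) l U :=
  (hf.deriv hF hU).deriv (hF.mono fun _ h => h.deriv hU) hU

section Deriv

variable {𝕜 : Type*} [NontriviallyNormedField 𝕜]

theorem deriv_iterate_eq_prod {f : 𝕜 → 𝕜} (hf : Differentiable 𝕜 f) (n : ℕ) (x : 𝕜) :
    deriv f^[n] x = ∏ k ∈ range n, deriv f (f^[k] x) := by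
  induction n with
  | zero => simp
  | succ n ih =>
    rw [Function.iterate_succ', deriv_comp x (hf _) (hf.iterate n x), ih, prod_range_succ,
      mul_comm]

theorem deriv_deriv_comp_of_deriv_eq_zero [CompleteSpace 𝕜] {h g : 𝕜 → 𝕜} {x : 𝕜}
    (hh : AnalyticAt 𝕜 h (g x)) (hg : AnalyticAt 𝕜 g x) (hgx : deriv g x = 0) :
    deriv (deriv (h ∘ g)) x = deriv h (g x) * deriv (deriv g) x := by
  have hchain : deriv (h ∘ g) =ᶠ[𝓝 x] fun z => deriv h (g z) * deriv g z := by
    filter_upwards [hg.eventually_analyticAt, hg.continuousAt.eventually hh.eventually_analyticAt]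
      with z hgz hhz
    exact deriv_comp z hhz.differentiableAt hgz.differentiableAt
  rw [hchain.deriv_eq, deriv_fun_mul (c := fun z => deriv h (g z))
    (hh.deriv.comp hg).differentiableAt hg.deriv.differentiableAt, hgx, mul_zero, zero_add]

end Deriv

theorem tendsto_deriv_deriv_of_tendstoLocallyUniformlyOn_neg_inv_iterate {f : ℂ → ℂ}
    (hf : Differentiable ℂ f) {U : Set ℂ} (hU : IsOpen U) {c : ℂ} (hc : c ∈ U)
    (hne : ∀ z ∈ U, ∀ n, f^[n] z ≠ 0) {b : ℂ} {φ : ℂ → ℂ}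
    (hφ : TendstoLocallyUniformlyOn
      (fun (n : ℕ) (z : ℂ) => -1 / f^[n] z - n - b * Real.log n) φ atTop U)
    (hcrit : deriv f c = 0) :
    Tendsto (fun m => deriv (deriv f) c * ((∏ k ∈ range m, deriv f (f^[k] (f c))) /
      (f^[m] (f c)) ^ 2)) atTop (𝓝 (deriv (deriv φ) c)) := by
  have hF : ∀ n : ℕ, DifferentiableOn ℂ (fun z => -1 / f^[n] z - n - b * Real.log n) U :=
    fun n => (((differentiableOn_const _).div (hf.iterate n).differentiableOn
      fun z hz => hne z hz n).sub_const _).sub_const _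
  refine (((hφ.deriv_deriv (.of_forall hF) hU).tendsto_at hc).comp
    (tendsto_add_atTop_nat 1)).congr fun m => ?_
  have hx : f^[m] (f c) ≠ 0 := hne c hc (m + 1)
  have hcrit_iter : deriv f^[m + 1] c = 0 := by
    rw [deriv_iterate_eq_prod hf, prod_range_succ', Function.iterate_zero_apply, hcrit, mul_zero]
  have hsecond : deriv (deriv f^[m + 1]) c = deriv f^[m] (f c) * deriv (deriv f) c := by
    rw [Function.iterate_succ]
    exact deriv_deriv_comp_of_deriv_eq_zero ((hf.iterate m).analyticAt _) (hf.analyticAt c) hcrit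
  have hh : AnalyticAt ℂ (fun w => -1 / w - ((m + 1 : ℕ) : ℂ) - b * Real.log (m + 1 : ℕ))
      (f^[m + 1] c) := by
    rw [Function.iterate_succ_apply]
    fun_prop (disch := assumption)
  change deriv (deriv ((fun w => -1 / w - ((m + 1 : ℕ) : ℂ) - b * Real.log (m + 1 : ℕ)) ∘
    f^[m + 1])) c = _
  rw [deriv_deriv_comp_of_deriv_eq_zero hh ((hf.iterate _).analyticAt c) hcrit_iter, hsecond,
    deriv_iterate_eq_prod hf, Function.iterate_succ_apply]
  simp [div_eq_mul_inv]
  ring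

theorem isBigO_inv_natCast_of_tendsto_neg_inv_sub {g : ℕ → ℂ} {b L : ℂ}
    (hg : Tendsto (fun n : ℕ => -1 / g n - n - b * Real.log n) atTop (𝓝 L)) :
    g =O[atTop] fun n => (n : ℝ)⁻¹ := by
  have hlog : (fun n : ℕ => b * (Real.log n : ℂ)) =o[atTop] fun n => (n : ℂ) := by
    refine IsBigO.trans_isLittleO (isBigO_const_mul_self b _ _) ?_
    rw [← isLittleO_norm_norm]
    simpa only [Function.comp_def, id, Complex.norm_real, Complex.norm_natCast,
      Real.norm_natCast] using
      (Real.isLittleO_log_id_atTop.comp_tendsto tendsto_natCast_atTop_atTop).norm_norm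
  have hone : (fun _ : ℕ => (1 : ℂ)) =o[atTop] fun n => (n : ℂ) := by
    rw [isLittleO_one_left_iff]
    simpa using tendsto_natCast_atTop_atTop
  have hequiv : (fun n => (g n)⁻¹) ~[atTop] fun n => -(n : ℂ) := by
    refine IsLittleO.isEquivalent ?_
    have := ((hg.isBigO_one ℂ).trans_isLittleO hone).add hlog
    refine (this.neg_left.congr_left fun n => ?_).neg_right
    simp only [Pi.sub_apply, div_eq_mul_inv]
    ring
  simpa [Pi.inv_def] using hequiv.inv.isBigO.norm_right

theorem exists_eq_X_add_X_sq_mul {R : Type*} [CommRing R] {P : R[X]} (h0 : P.coeff 0 = 0)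
    (h1 : P.coeff 1 = 1) : ∃ T : R[X], P = X + X ^ 2 * T := by
  have hdvd : (X : R[X]) ^ 2 ∣ P - X := by
    rw [X_pow_dvd_iff]
    intro d hd
    interval_cases d <;> simp [h0, h1]
  obtain ⟨T, hT⟩ := hdvd
  exact ⟨T, by rw [← hT, add_sub_cancel]⟩

theorem isBigO_eval_derivative_mul_sq_div_sq_sub_one {𝕜 : Type*} [NormedField 𝕜] {P : 𝕜[X]}
    (h0 : P.coeff 0 = 0) (h1 : P.coeff 1 = 1) :
    (fun z => P.derivative.eval z * z ^ 2 / P.eval z ^ 2 - 1) =O[𝓝[≠] 0] fun z => z ^ 2 := by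
  obtain ⟨T, rfl⟩ := exists_eq_X_add_X_sq_mul h0 h1
  set D : 𝕜 → 𝕜 := fun z => 1 + z * T.eval z
  have hD : ContinuousAt D 0 := by fun_prop
  have hD0 : D 0 ≠ 0 := by simp [D]
  set k : 𝕜 → 𝕜 := fun z => (T.derivative.eval z - T.eval z ^ 2) / D z ^ 2
  have hk : k =O[𝓝[≠] 0] fun _ => (1 : 𝕜) :=
    (((by fun_prop : ContinuousAt (fun z => T.derivative.eval z - T.eval z ^ 2) 0).div
      (hD.pow 2) (pow_ne_zero 2 hD0)).tendsto.isBigO_one 𝕜).mono nhdsWithin_le_nhds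
  have hfactor : (fun z => z ^ 2 * k z) =ᶠ[𝓝[≠] 0]
      fun z => (X + X ^ 2 * T).derivative.eval z * z ^ 2 / (X + X ^ 2 * T).eval z ^ 2 - 1 := by
    filter_upwards [self_mem_nhdsWithin, nhdsWithin_le_nhds (hD.eventually_ne hD0)] with z hz hDz
    have hz : z ≠ 0 := hz
    simp only [D] at hDz
    simp only [derivative_add, derivative_X, derivative_mul, derivative_X_pow, eval_add, eval_mul,
      eval_pow, eval_X, eval_one, eval_C, k, D]
    field_simp
    ring
  simpa using ((isBigO_refl (fun z : 𝕜 => z ^ 2) _).mul hk).congr' hfactor .rfl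

theorem exists_tendsto_prod_range_ne_zero {𝕜 : Type*} [NormedField 𝕜] [CompleteSpace 𝕜]
    {u : ℕ → 𝕜} (hu : Summable fun k => ‖u k - 1‖) (hu0 : ∀ k, u k ≠ 0) :
    ∃ L ≠ 0, Tendsto (fun m => ∏ k ∈ range m, u k) atTop (𝓝 L) := by
  have hmul := multipliable_one_add_of_summable hu
  simp only [add_sub_cancel] at hmul
  refine ⟨∏' k, u k, ?_, hmul.hasProd.tendsto_prod_nat⟩
  simpa using tprod_one_add_ne_zero_of_summable (f := fun k => u k - 1) (by simpa using hu0) hu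

theorem prod_range_div_sq_eq {𝕜 : Type*} [Field 𝕜] {x : ℕ → 𝕜} (hx : ∀ k, x k ≠ 0)
    (d : ℕ → 𝕜) (m : ℕ) :
    (∏ k ∈ range m, d k) / x m ^ 2 =
      (x 0 ^ 2)⁻¹ * ∏ k ∈ range m, d k * x k ^ 2 / x (k + 1) ^ 2 := by
  induction m with
  | zero => simp [div_eq_inv_mul]
  | succ m ih =>
    rw [prod_range_succ, prod_range_succ, ← mul_assoc, ← ih]
    have := hx m
    have := hx (m + 1)
    field_simp

theorem summable_norm_sq_of_isBigO_inv {E : Type*} [NormedAddCommGroup E] {g : ℕ → E}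
    (hg : g =O[atTop] fun n => (n : ℝ)⁻¹) : Summable fun n => ‖g n‖ ^ 2 :=
  summable_of_isBigO_nat (Real.summable_nat_pow_inv.2 one_lt_two)
    (by simpa [inv_pow] using (hg.norm_left.pow 2))

theorem exists_tendsto_prod_eval_derivative_div_sq_ne_zero {𝕜 : Type*} [NormedField 𝕜]
    [CompleteSpace 𝕜] {P : 𝕜[X]} (h0 : P.coeff 0 = 0) (h1 : P.coeff 1 = 1) {x : ℕ → 𝕜}
    (hx : ∀ k, x (k + 1) = P.eval (x k)) (hx0 : ∀ k, x k ≠ 0)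
    (hder : ∀ k, P.derivative.eval (x k) ≠ 0) (hlim : Tendsto x atTop (𝓝 0))
    (hsum : Summable fun k => ‖x k‖ ^ 2) :
    ∃ L ≠ 0,
      Tendsto (fun m => (∏ k ∈ range m, P.derivative.eval (x k)) / x m ^ 2) atTop (𝓝 L) := by
  set u : ℕ → 𝕜 := fun k => P.derivative.eval (x k) * x k ^ 2 / x (k + 1) ^ 2
  have hu0 : ∀ k, u k ≠ 0 := fun k => by simp [u, hder, hx0]
  have hu : Summable fun k => ‖u k - 1‖ := by
    have hx' : Tendsto x atTop (𝓝[≠] 0) := tendsto_nhdsWithin_iff.2 ⟨hlim, .of_forall hx0⟩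
    refine summable_of_isBigO_nat hsum ?_
    simpa [u, hx] using
      ((isBigO_eval_derivative_mul_sq_div_sq_sub_one h0 h1).comp_tendsto hx').norm_norm
  obtain ⟨L, hL, hprod⟩ := exists_tendsto_prod_range_ne_zero hu hu0
  refine ⟨(x 0 ^ 2)⁻¹ * L, mul_ne_zero (by simp [hx0]) hL, ?_⟩
  simpa only [prod_range_div_sq_eq hx0] using hprod.const_mul _

theorem stmt_12_general (P : Polynomial ℂ) (a : ℂ)
    (h0 : P.coeff 0 = 0) (h1 : P.coeff 1 = 1)
    (f : ℂ → ℂ) (hfP : f = fun z => P.eval z)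
    (U : Set ℂ) (hU : IsOpen U) (c : ℂ) (hc : c ∈ U)
    (hinv : ∀ z ∈ U, ∀ k : ℕ, f^[k] z ∈ U ∧ f^[k] z ≠ 0)
    (φ : ℂ → ℂ)
    (hφ : TendstoLocallyUniformlyOn
      (fun (n : ℕ) (z : ℂ) => -1 / f^[n] z - n - (1 - a) * Real.log n) φ atTop U)
    (hcrit : deriv f c = 0) :
    iteratedDeriv 2 φ c = 0 ↔
      (iteratedDeriv 2 f c = 0 ∨ ∃ k : ℕ, 1 ≤ k ∧ deriv f (f^[k] c) = 0) := by
  have hf : Differentiable ℂ f := hfP ▸ P.differentiable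
  have hdf : ∀ z, deriv f z = P.derivative.eval z := fun z => hfP ▸ P.deriv
  have hne : ∀ z ∈ U, ∀ n, f^[n] z ≠ 0 := fun z hz n => (hinv z hz n).2
  have hlim :=
    tendsto_deriv_deriv_of_tendstoLocallyUniformlyOn_neg_inv_iterate hf hU hc hne hφ hcrit
  simp only [iteratedDeriv_succ, iteratedDeriv_zero]
  constructor
  · intro hφ2
    by_contra! ⟨hf2, hk⟩
    set x : ℕ → ℂ := fun k => f^[k] (f c)
    have hx : ∀ k, x (k + 1) = P.eval (x k) := fun k => by
      simp only [x, Function.iterate_succ_apply', hfP]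
    have hrate := isBigO_inv_natCast_of_tendsto_neg_inv_sub (hφ.tendsto_at hc)
    obtain ⟨L, hL, hprod⟩ := exists_tendsto_prod_eval_derivative_div_sq_ne_zero h0 h1 hx
      (fun k => hne c hc (k + 1)) (fun k => hdf _ ▸ hk (k + 1) (by omega))
      ((hrate.trans_tendsto tendsto_inv_atTop_nhds_zero_nat).comp (tendsto_add_atTop_nat 1))
      ((summable_nat_add_iff 1).2 (summable_norm_sq_of_isBigO_inv hrate))
    simp only [hdf] at hlim
    exact mul_ne_zero hf2 hL (tendsto_nhds_unique (hprod.const_mul _) (hφ2 ▸ hlim))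
  · rintro (hf2 | ⟨k, hk1, hk⟩)
    · exact tendsto_nhds_unique hlim (by simp [hf2])
    · obtain ⟨j, rfl⟩ : ∃ j, k = j + 1 := ⟨k - 1, by omega⟩
      rw [Function.iterate_succ_apply] at hk
      refine tendsto_nhds_unique hlim (tendsto_const_nhds.congr' ?_)
      filter_upwards [eventually_gt_atTop j] with m hm
      rw [prod_eq_zero (f := fun k => deriv f (f^[k] (f c))) (mem_range.2 hm) hk]
      simp

theorem stmt_12 (P : Polynomial ℂ) (a : ℂ)
    (h0 : P.coeff 0 = 0) (h1 : P.coeff 1 = 1) (h2 : P.coeff 2 = 1) (h3 : P.coeff 3 = a)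
    (f : ℂ → ℂ) (hfP : f = fun z => P.eval z)
    (U : Set ℂ) (hU : IsOpen U) (c : ℂ) (hc : c ∈ U)
    (hinv : ∀ z ∈ U, ∀ k : ℕ, f^[k] z ∈ U ∧ f^[k] z ≠ 0)
    (φ : ℂ → ℂ)
    (hφ : TendstoLocallyUniformlyOn
      (fun (n : ℕ) (z : ℂ) => -1 / f^[n] z - n - (1 - a) * Real.log n) φ atTop U)
    (hcrit : deriv f c = 0)
    (hbasin : Tendsto (fun n : ℕ => f^[n] c) atTop (nhds 0)) :
    iteratedDeriv 2 φ c = 0 ↔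
      (iteratedDeriv 2 f c = 0 ∨ ∃ k : ℕ, 1 ≤ k ∧ deriv f (f^[k] c) = 0) :=
  stmt_12_general P a h0 h1 f hfP U hU c hc hinv φ hφ hcrit
end

section
/- Let (f_n) be univalent holomorphic functions on a uniform neighborhood of 0 with f_n(0) = 0 and λ_n := f_n'(0), such that the compositions f_{n,0} = f_n∘⋯∘f_1 are defined on a smaller neighborhood and form a normal family with |λ(n)| = |∏_{j=1}^n λ_j| bounded above and away from 0. Then the maps ψ_{n+1}(z) := f_{n,0}(λ(n)^{−1}z) are tangent to the identity at 0, uniformly bounded, and satisfy the linearization relation f_{n+1} ∘ ψ_{n+1}(z) = ψ_{n+2}(λ_{n+1} z); i.e. the sequence (f_n) is rotationally linearizable. -/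
/-! The linearizing maps are `ψ_{n+1} = f_{n,0} ∘ (λ(n)⁻¹ ·)`. The chain rule gives
`f_{n,0}'(0) = λ(n)`, so `ψ_{n+1}` is tangent to the identity; the lower bound `a ≤ |λ(n)|`
sends the ball of radius `a r'` into the ball of radius `r'`, where the compositions are
bounded; and `λ(n+1) = λ(n) λ_{n+1}` turns the linearization relation into the recursion
`f_{n+1,0} = f_{n+1} ∘ f_{n,0}`. -/

open Metric

/-- `iterComp f m k z = f (m+k) (⋯ (f (m+1) z))`, i.e. the composition
`f_{m+k} ∘ ⋯ ∘ f_{m+1}` applied to `z`. -/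
def iterComp (f : ℕ → ℂ → ℂ) (m : ℕ) : ℕ → ℂ → ℂ
  | 0, z => z
  | k + 1, z => f (m + k + 1) (iterComp f m k z)

section iterComp

variable (f : ℕ → ℂ → ℂ)

theorem iterComp_zero_succ (n : ℕ) (z : ℂ) :
    iterComp f 0 (n + 1) z = f (n + 1) (iterComp f 0 n z) := by
  rw [iterComp, zero_add]

variable {f}

theorem iterComp_apply_zero (hfix : ∀ n, f n 0 = 0) (m n : ℕ) : iterComp f m n 0 = 0 := by
  induction n with
  | zero => rfl
  | succ k ih => rw [iterComp, ih, hfix]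

theorem hasDerivAt_iterComp (hdiff : ∀ n, DifferentiableAt ℂ (f n) 0)
    (hfix : ∀ n, f n 0 = 0) (n : ℕ) :
    HasDerivAt (iterComp f 0 n) (∏ j ∈ Finset.Icc 1 n, deriv (f j) 0) 0 := by
  induction n with
  | zero =>
    rw [Finset.Icc_eq_empty (by omega), Finset.prod_empty]
    exact hasDerivAt_id' 0
  | succ k ih =>
    have hfk : HasDerivAt (f (k + 1)) (deriv (f (k + 1)) 0) (iterComp f 0 k 0) := by
      rw [iterComp_apply_zero hfix]
      exact (hdiff (k + 1)).hasDerivAt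
    rw [Finset.prod_Icc_succ_top (Nat.le_add_left 1 k), mul_comm]
    exact (hfk.comp 0 ih).congr_of_eventuallyEq
      (Filter.Eventually.of_forall fun z => iterComp_zero_succ f k z)

end iterComp

theorem deriv_comp_inv_mul_of_hasDerivAt {𝕜 : Type*} [NontriviallyNormedField 𝕜]
    {g : 𝕜 → 𝕜} {c : 𝕜} (hg : HasDerivAt g c 0) (hc : c ≠ 0) :
    deriv (fun z => g (c⁻¹ * z)) 0 = 1 := by
  have hlin : HasDerivAt (fun z : 𝕜 => c⁻¹ * z) c⁻¹ 0 := by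
    simpa using (hasDerivAt_id (0 : 𝕜)).const_mul c⁻¹
  rw [← mul_zero c⁻¹] at hg
  exact (hg.comp 0 hlin).deriv.trans (mul_inv_cancel₀ hc)

theorem inv_mul_mem_ball_zero {𝕜 : Type*} [NormedDivisionRing 𝕜] {c z : 𝕜} {a r : ℝ}
    (ha : 0 < a) (hc : a ≤ ‖c‖) (hz : z ∈ ball (0 : 𝕜) (a * r)) :
    c⁻¹ * z ∈ ball (0 : 𝕜) r := by
  rw [mem_ball_zero_iff] at hz ⊢
  have hc0 : 0 < ‖c‖ := ha.trans_le hc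
  have hr : 0 ≤ r := nonneg_of_mul_nonneg_right ((norm_nonneg z).trans hz.le) ha
  rw [norm_mul, norm_inv, inv_mul_lt_iff₀ hc0]
  exact hz.trans_le (mul_le_mul_of_nonneg_right hc hr)

theorem stmt_16_general (f : ℕ → ℂ → ℂ) (r r' : ℝ) (hr : 0 < r') (hr' : r' ≤ r)
    (hdiff : ∀ n, AnalyticOn ℂ (f n) (ball (0:ℂ) r))
    (hfix : ∀ n, f n 0 = 0)
    (M : ℝ) (hbdd : ∀ n, ∀ z ∈ ball (0:ℂ) r', ‖iterComp f 0 n z‖ ≤ M)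
    (a b : ℝ) (ha : 0 < a)
    (hΛ : ∀ n : ℕ, a ≤ ‖∏ j ∈ Finset.Icc 1 n, deriv (f j) 0‖ ∧
      ‖∏ j ∈ Finset.Icc 1 n, deriv (f j) 0‖ ≤ b) :
    ∃ ρ > (0:ℝ), ∃ M' : ℝ,
      (∀ n : ℕ,
        iterComp f 0 n ((∏ j ∈ Finset.Icc 1 n, deriv (f j) 0)⁻¹ * 0) = 0 ∧
        deriv (fun z => iterComp f 0 n ((∏ j ∈ Finset.Icc 1 n, deriv (f j) 0)⁻¹ * z)) 0 = 1) ∧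
      (∀ n : ℕ, ∀ z ∈ ball (0:ℂ) ρ,
        ‖iterComp f 0 n ((∏ j ∈ Finset.Icc 1 n, deriv (f j) 0)⁻¹ * z)‖ ≤ M') ∧
      (∀ n : ℕ, ∀ z ∈ ball (0:ℂ) ρ,
        f (n + 1) (iterComp f 0 n ((∏ j ∈ Finset.Icc 1 n, deriv (f j) 0)⁻¹ * z)) =
          iterComp f 0 (n + 1)
            ((∏ j ∈ Finset.Icc 1 (n + 1), deriv (f j) 0)⁻¹ * (deriv (f (n + 1)) 0 * z))) := by
  have hΛ0 (n : ℕ) : ∏ j ∈ Finset.Icc 1 n, deriv (f j) 0 ≠ 0 :=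
    norm_pos_iff.mp (ha.trans_le (hΛ n).1)
  have hdiff0 (n : ℕ) : DifferentiableAt ℂ (f n) 0 :=
    (hdiff n).differentiableOn.differentiableAt (ball_mem_nhds 0 (hr.trans_le hr'))
  refine ⟨a * r', mul_pos ha hr, M, fun n => ⟨?_, ?_⟩, fun n z hz => ?_, fun n z _ => ?_⟩
  · rw [mul_zero, iterComp_apply_zero hfix]
  · exact deriv_comp_inv_mul_of_hasDerivAt (hasDerivAt_iterComp hdiff0 hfix n) (hΛ0 n)
  · exact hbdd n _ (inv_mul_mem_ball_zero ha (hΛ n).1 hz)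
  · have hΛsucc := Finset.prod_Icc_succ_top (Nat.le_add_left 1 n) fun j => deriv (f j) 0
    have hμ : deriv (f (n + 1)) 0 ≠ 0 := right_ne_zero_of_mul (hΛsucc ▸ hΛ0 (n + 1))
    rw [iterComp_zero_succ, hΛsucc, mul_inv, mul_assoc, inv_mul_cancel_left₀ hμ]

theorem stmt_16 (f : ℕ → ℂ → ℂ) (r r' : ℝ) (hr : 0 < r') (hr' : r' ≤ r)
    (hdiff : ∀ n, AnalyticOn ℂ (f n) (ball (0:ℂ) r))
    (hinj : ∀ n, Set.InjOn (f n) (ball (0:ℂ) r))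
    (hfix : ∀ n, f n 0 = 0)
    (hmaps : ∀ n, Set.MapsTo (iterComp f 0 n) (ball (0:ℂ) r') (ball (0:ℂ) r))
    (M : ℝ) (hbdd : ∀ n, ∀ z ∈ ball (0:ℂ) r', ‖iterComp f 0 n z‖ ≤ M)
    (a b : ℝ) (ha : 0 < a)
    (hΛ : ∀ n : ℕ, a ≤ ‖∏ j ∈ Finset.Icc 1 n, deriv (f j) 0‖ ∧
      ‖∏ j ∈ Finset.Icc 1 n, deriv (f j) 0‖ ≤ b) :
    ∃ ρ > (0:ℝ), ∃ M' : ℝ,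
      (∀ n : ℕ,
        iterComp f 0 n ((∏ j ∈ Finset.Icc 1 n, deriv (f j) 0)⁻¹ * 0) = 0 ∧
        deriv (fun z => iterComp f 0 n ((∏ j ∈ Finset.Icc 1 n, deriv (f j) 0)⁻¹ * z)) 0 = 1) ∧
      (∀ n : ℕ, ∀ z ∈ ball (0:ℂ) ρ,
        ‖iterComp f 0 n ((∏ j ∈ Finset.Icc 1 n, deriv (f j) 0)⁻¹ * z)‖ ≤ M') ∧
      (∀ n : ℕ, ∀ z ∈ ball (0:ℂ) ρ,
        f (n + 1) (iterComp f 0 n ((∏ j ∈ Finset.Icc 1 n, deriv (f j) 0)⁻¹ * z)) =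
          iterComp f 0 (n + 1)
            ((∏ j ∈ Finset.Icc 1 (n + 1), deriv (f j) 0)⁻¹ * (deriv (f (n + 1)) 0 * z))) :=
  stmt_16_general f r r' hr hr' hdiff hfix M hbdd a b ha hΛ
end
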